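/- Let D be a digraph with vertices u, v in the same strong component and (u,v) an arc of D, and let D' be obtained from D by contracting the arc (u,v) into a single vertex w. Then a set X of new arcs makes D strongly connected if and only if the corresponding set X' (replacing endpoints u or v by w) makes D' strongly connected; in particular minimum augmentation sizes agree. -/

import Mathlib

def Reach {α : Type*} (A : Set (α × α)) (u v : α) : Prop :=
  Relation.ReflTransGen (fun x y => (x, y) ∈ A) u v

def Strong {α : Type*} (A : Set (α × α)) : Prop := ∀ u v : α, Reach A u v

def SameSCC {α : Type*} (A : Set (α × α)) (u v : α) : Prop := Reach A u v ∧ Reach A v u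

/-- Strong connectivity restricted to a vertex subset `S`. -/
def StrongOn {α : Type*} (S : Set α) (A : Set (α × α)) : Prop :=
  ∀ x ∈ S, ∀ y ∈ S, Reach A x y

/-- The map contracting `v` onto `u` (so the merged vertex is `u = w`). -/
def contractMap {V : Type*} [DecidableEq V] (u v x : V) : V := if x = v then u else x

def contractPair {V : Type*} [DecidableEq V] (u v : V) (p : V × V) : V × V :=
  (contractMap u v p.1, contractMap u v p.2)

/-- The arc set obtained by contracting the arc `(u, v)`: substitute the merged vertex for
`u` and `v` in every arc, removing the loop created by `(u, v)`. -/
def contractArcs {V : Type*} [DecidableEq V] (A : Set (V × V)) (u v : V) : Set (V × V) :=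
  (contractPair u v '' A) \ {(u, u)}

lemma reach_mono {α : Type*} {A B : Set (α × α)} (h : A ⊆ B) {x y : α}
    (hr : Reach A x y) : Reach B x y :=
  Relation.ReflTransGen.mono (fun a b hab => h hab) _ _ hr

lemma contractMap_ne {V : Type*} [DecidableEq V] {u v : V} (hne : u ≠ v) (x : V) :
    contractMap u v x ≠ v := by
  unfold contractMap; split
  · exact hne
  · assumption

lemma contractMap_fix {V : Type*} [DecidableEq V] {u v x : V} (hx : x ≠ v) :
    contractMap u v x = x := if_neg hx

lemma contractPair_fix {V : Type*} [DecidableEq V] {u v : V} {p : V × V}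
    (h1 : p.1 ≠ v) (h2 : p.2 ≠ v) : contractPair u v p = p := by
  unfold contractPair
  rw [contractMap_fix h1, contractMap_fix h2]

lemma reach_push {V : Type*} [DecidableEq V] {u v : V} {C : Set (V × V)} {x y : V}
    (h : Reach C x y) :
    Reach (contractPair u v '' C \ {(u, u)}) (contractMap u v x) (contractMap u v y) := by
  induction h with
  | refl => exact .refl
  | tail _ hstep ih =>
    rename_i m d _
    by_cases hmd : contractMap u v m = contractMap u v d
    · rwa [← hmd]
    · refine ih.tail ⟨⟨(m, d), hstep, rfl⟩, ?_⟩
      simp only [Set.mem_singleton_iff, contractPair, Prod.mk.injEq, not_and]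
      intro h1 h2
      exact absurd (h1.trans h2.symm) hmd

lemma step_pull {V : Type*} [DecidableEq V] {u v : V} {A X C : Set (V × V)}
    (huv : (u, v) ∈ A) (hvu : Reach A v u) (hC : C ⊆ A ∪ X) {c d : V}
    (h : (c, d) ∈ contractPair u v '' C) : Reach (A ∪ X) c d := by
  obtain ⟨⟨c0, d0⟩, hmem, heq⟩ := h
  have h1 : contractMap u v c0 = c := congrArg Prod.fst heq
  have h2 : contractMap u v d0 = d := congrArg Prod.snd heq
  have ruv : Reach (A ∪ X) u v := .single (Or.inl huv)
  have rvu : Reach (A ∪ X) v u := reach_mono Set.subset_union_left hvu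
  have ha : Reach (A ∪ X) c c0 := by
    unfold contractMap at h1; split at h1
    · rename_i hc0; subst hc0; rw [← h1]; exact ruv
    · rw [h1]; exact .refl
  have hb : Reach (A ∪ X) d0 d := by
    unfold contractMap at h2; split at h2
    · rename_i hd0; subst hd0; rw [← h2]; exact rvu
    · rw [h2]; exact .refl
  exact (ha.tail (hC hmem)).trans hb

lemma reach_pull {V : Type*} [DecidableEq V] {u v : V} {A X : Set (V × V)}
    (huv : (u, v) ∈ A) (hvu : Reach A v u) {c d : V}
    (h : Reach (contractArcs A u v ∪ contractPair u v '' X) c d) :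
    Reach (A ∪ X) c d := by
  induction h with
  | refl => exact .refl
  | tail _ hstep ih =>
    rename_i m d' _
    refine ih.trans ?_
    rcases hstep with hstep | hstep
    · exact step_pull huv hvu Set.subset_union_left hstep.1
    · exact step_pull huv hvu Set.subset_union_right hstep

lemma key {V : Type*} [DecidableEq V] {A : Set (V × V)} {u v : V}
    (hne : u ≠ v) (huv : (u, v) ∈ A) (hsame : SameSCC A u v) (X : Set (V × V)) :
    Strong (A ∪ X) ↔
      StrongOn {x : V | x ≠ v} (contractArcs A u v ∪ contractPair u v '' X) := by
  constructor
  · intro hS x hx y hy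
    have := reach_push (u := u) (v := v) (hS x y)
    rw [contractMap_fix hx, contractMap_fix hy] at this
    refine reach_mono ?_ this
    intro p hp
    rcases (Set.image_union (contractPair u v) A X ▸ hp.1) with h | h
    · exact Or.inl ⟨h, hp.2⟩
    · exact Or.inr h
  · intro hS a b
    have ha := contractMap_ne (u := u) hne a
    have hb := contractMap_ne (u := u) hne b
    have hmid : Reach (A ∪ X) (contractMap u v a) (contractMap u v b) :=
      reach_pull huv hsame.2 (hS _ ha _ hb)
    have ruv : Reach (A ∪ X) u v := .single (Or.inl huv)
    have rvu : Reach (A ∪ X) v u := reach_mono Set.subset_union_left hsame.2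
    have h1 : Reach (A ∪ X) a (contractMap u v a) := by
      unfold contractMap; split
      · rename_i h; subst h; exact rvu
      · exact .refl
    have h2 : Reach (A ∪ X) (contractMap u v b) b := by
      unfold contractMap; split
      · rename_i h; subst h; exact ruv
      · exact .refl
    exact (h1.trans hmid).trans h2

/-- Contracting an arc `(u,v)` lying inside a strong component preserves the augmentation
problem: a set `X` of new arcs makes `D` strongly connected iff the corresponding set `X'`
(substituting the merged vertex for endpoints `u`, `v`) makes the contracted digraph `D'`
strongly connected; in particular the minimum augmentation sizes agree. -/
theorem stmt3 {V : Type*} [Fintype V] [DecidableEq V] (A : Set (V × V)) (u v : V)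
    (hne : u ≠ v) (huv : (u, v) ∈ A) (hsame : SameSCC A u v) :
    (∀ X : Set (V × V),
      Strong (A ∪ X) ↔
        StrongOn {x : V | x ≠ v} (contractArcs A u v ∪ contractPair u v '' X)) ∧
    sInf {n : ℕ | ∃ X : Finset (V × V), X.card = n ∧ Strong (A ∪ (↑X : Set (V × V)))} =
      sInf {n : ℕ | ∃ X' : Finset (V × V), (∀ p ∈ X', p.1 ≠ v ∧ p.2 ≠ v) ∧ X'.card = n ∧
        StrongOn {x : V | x ≠ v} (contractArcs A u v ∪ (↑X' : Set (V × V)))} := by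
  refine ⟨fun X => key hne huv hsame X, ?_⟩
  set S1 := {n : ℕ | ∃ X : Finset (V × V), X.card = n ∧ Strong (A ∪ (↑X : Set (V × V)))}
    with hS1
  set S2 := {n : ℕ | ∃ X' : Finset (V × V), (∀ p ∈ X', p.1 ≠ v ∧ p.2 ≠ v) ∧ X'.card = n ∧
      StrongOn {x : V | x ≠ v} (contractArcs A u v ∪ (↑X' : Set (V × V)))} with hS2
  -- from an element of S1, produce a smaller-or-equal element of S2
  have map12 : ∀ n ∈ S1, ∃ m ∈ S2, m ≤ n := by
    rintro n ⟨X, hcard, hstrong⟩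
    refine ⟨(X.image (contractPair u v)).card, ⟨X.image (contractPair u v), ?_, rfl, ?_⟩, ?_⟩
    · intro p hp
      obtain ⟨q, _, rfl⟩ := Finset.mem_image.mp hp
      exact ⟨contractMap_ne hne _, contractMap_ne hne _⟩
    · have := (key hne huv hsame (↑X)).mp hstrong
      rwa [Finset.coe_image]
    · rw [← hcard]; exact Finset.card_image_le
  -- from an element of S2, produce an equal element of S1
  have map21 : ∀ n ∈ S2, n ∈ S1 := by
    rintro n ⟨X', hX', hcard, hstrong⟩
    refine ⟨X', hcard, ?_⟩
    refine (key hne huv hsame (↑X')).mpr ?_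
    have himg : contractPair u v '' (↑X' : Set (V × V)) = ↑X' := by
      ext p
      constructor
      · rintro ⟨q, hq, rfl⟩
        rw [contractPair_fix (hX' q hq).1 (hX' q hq).2]; exact hq
      · intro hp; exact ⟨p, hp, contractPair_fix (hX' p hp).1 (hX' p hp).2⟩
    rwa [himg]
  have hS1ne : S1.Nonempty := by
    refine ⟨(Finset.univ : Finset (V × V)).card, Finset.univ, rfl, fun x y => ?_⟩
    exact .single (Or.inr (by simp))
  obtain ⟨m0, hm0, _⟩ := map12 _ (Nat.sInf_mem hS1ne)
  have hS2ne : S2.Nonempty := ⟨m0, hm0⟩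
  apply le_antisymm
  · exact Nat.sInf_le (map21 _ (Nat.sInf_mem hS2ne))
  · obtain ⟨m, hm, hle⟩ := map12 _ (Nat.sInf_mem hS1ne)
    exact le_trans (Nat.sInf_le hm) hle
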